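/- arXiv:1703.07008 — 4 statements merged into one kernel-verified Lean document; each statement's English description precedes it below -/
import Mathlib

section
/- Let G be a finite chordal graph with clique number at most t. Then the chromatic number of the adjacent-cliques graph AC(G) satisfies χ(AC(G)) ≤ ((t+1) choose 2). -/
open SimpleGraph

/-- A simple graph is *chordal* if every cycle of length at least 4 has a chord, i.e.
two vertices of the cycle that are adjacent in the graph but not consecutive on the cycle. -/
def SimpleGraph.IsChordal {V : Type*} (G : SimpleGraph V) : Prop :=
  ∀ (v : V) (c : G.Walk v v), c.IsCycle → 4 ≤ c.length →
    ∃ x y, x ∈ c.support ∧ y ∈ c.support ∧ G.Adj x y ∧ ¬ c.toSubgraph.Adj x y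

/-- The exact distance-`p` graph of `G`: same vertex set, with an edge between distinct
vertices `u` and `v` iff their graph distance is exactly `p`. -/
def SimpleGraph.exactDistGraph {V : Type*} (G : SimpleGraph V) (p : ℕ) : SimpleGraph V where
  Adj u v := u ≠ v ∧ G.edist u v = p
  symm := ⟨fun u v h => ⟨h.1.symm, by rw [SimpleGraph.edist_comm]; exact h.2⟩⟩
  loopless := ⟨fun v h => h.1 rfl⟩

/-- The *adjacent-cliques graph* of `G`: one vertex for each nonempty clique of `G`; two
vertices are adjacent iff the corresponding cliques are disjoint and joined by an edge of `G`. -/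
def SimpleGraph.acGraph {V : Type*} (G : SimpleGraph V) :
    SimpleGraph {K : Finset V // K.Nonempty ∧ G.IsClique (K : Set V)} where
  Adj K L := Disjoint K.1 L.1 ∧ ∃ x ∈ K.1, ∃ y ∈ L.1, G.Adj x y
  symm := by
    constructor
    rintro K L ⟨hd, x, hx, y, hy, hxy⟩
    exact ⟨hd.symm, y, hy, x, hx, hxy.symm⟩
  loopless := by
    constructor
    intro K h
    exact K.2.1.ne_empty (disjoint_self.mp h.1)

/-!
A finite chordal graph has a perfect elimination ordering `f`: the later neighbours of every
vertex form a clique. This comes from Dirac's argument: if `v` is not adjacent to `w`, the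
neighbours of `v` that touch the component `C` of `w` in `G - N[v]` form a clique (a non-edge
`s s'` among them closes a chordless cycle `v s ... s' v` through `C`), so a simplicial vertex of
`C ∪ N(C)`, found by induction, can be taken in `C` and is simplicial in `G`.

Colour every clique by the colour of its `f`-last vertex. The last vertices `u`, `w` of two
adjacent cliques are adjacent or have a common neighbour preceding one of them, and in the graph
of such pairs every later neighbour of `u` is a later neighbour of the clique `Z = {u} ∪ N⁺(u)`
of at most `t` vertices. Taking the vertices of `Z` in order, the `i`-th adds at most `t - i` new
vertices, so there are fewer than `t + (t - 1) + ... + 1 = (t + 1).choose 2` of them, and the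
greedy colouring from the last vertex backwards needs no more colours.
-/

open Finset

theorem Nat.sum_range_sub_eq_choose_two (t : ℕ) :
    ∑ i ∈ range t, (t - i) = (t + 1).choose 2 := by
  induction t with
  | zero => rfl
  | succ t ih =>
    rw [sum_range_succ', Nat.choose_succ_succ', ← ih, Nat.choose_one_right]
    simp only [Nat.add_sub_add_right, Nat.sub_zero]
    ring

namespace SimpleGraph

variable {V : Type*} {G : SimpleGraph V}

theorem IsClique.card_le_of_cliqueFree {s : Finset V} {n : ℕ} (hs : G.IsClique (s : Set V))
    (h : G.CliqueFree (n + 1)) : #s ≤ n := by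
  by_contra! hn
  obtain ⟨u, hus, hu⟩ := exists_subset_card_eq hn
  exact h u ⟨hs.subset (by simpa using hus), hu⟩

theorem colorable_of_forall_card_later_lt {α : Type*} [LinearOrder α] [Fintype V]
    {H : SimpleGraph V} [DecidableRel H.Adj] {f : V → α} (hf : Function.Injective f) {n : ℕ}
    (h : ∀ u, #{w | H.Adj u w ∧ f u < f w} < n) : H.Colorable n := by
  classical
  suffices ∀ s : Finset V, ∃ c : V → ℕ, (∀ u ∈ s, c u < n) ∧
      ∀ u ∈ s, ∀ w ∈ s, H.Adj u w → c u ≠ c w by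
    obtain ⟨c, hcn, hc⟩ := this univ
    exact ⟨Coloring.mk (fun u => ⟨c u, hcn u (mem_univ u)⟩)
      fun huw => Fin.val_ne_iff.mp (hc _ (mem_univ _) _ (mem_univ _) huw)⟩
  intro s
  induction s using Finset.induction_on_min_value f with
  | empty => exact ⟨0, by simp, by simp⟩
  | insert a s has ha_min ih =>
    obtain ⟨c, hcn, hc⟩ := ih
    have hlater : {w ∈ s | H.Adj a w} ⊆ ({w | H.Adj a w ∧ f a < f w} : Finset V) := by
      intro w hw
      obtain ⟨hws, haw⟩ := mem_filter.mp hw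
      have hwa : w ≠ a := fun hwa => has (hwa ▸ hws)
      exact mem_filter.mpr ⟨mem_univ w, haw, (ha_min w hws).lt_of_ne (hf.ne hwa.symm)⟩
    obtain ⟨k, hk, hk_unused⟩ : ∃ k ∈ range n, k ∉ {w ∈ s | H.Adj a w}.image c := by
      refine exists_mem_notMem_of_card_lt_card ?_
      calc #({w ∈ s | H.Adj a w}.image c) ≤ #{w ∈ s | H.Adj a w} := card_image_le
        _ ≤ #{w | H.Adj a w ∧ f a < f w} := card_le_card hlater
        _ < #(range n) := by rw [card_range]; exact h a
    refine ⟨Function.update c a k, ?_, ?_⟩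
    · intro u hu
      rcases eq_or_ne u a with rfl | hua
      · simpa using hk
      · simpa [hua] using hcn u ((mem_insert.mp hu).resolve_left hua)
    · have hk_ne : ∀ w ∈ s, H.Adj a w → k ≠ c w := fun w hws haw hkw =>
        hk_unused (mem_image.mpr ⟨w, mem_filter.mpr ⟨hws, haw⟩, hkw.symm⟩)
      intro u hu w hw huw
      rcases mem_insert.mp hu with rfl | hus <;> rcases mem_insert.mp hw with rfl | hws
      · exact absurd huw (H.loopless.irrefl _)
      · simpa [Function.update_of_ne (ne_of_mem_of_not_mem hws has)] using hk_ne w hws huw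
      · simpa [Function.update_of_ne (ne_of_mem_of_not_mem hus has)] using
          (hk_ne u hus huw.symm).symm
      · simpa [Function.update_of_ne (ne_of_mem_of_not_mem hus has),
          Function.update_of_ne (ne_of_mem_of_not_mem hws has)] using hc u hus w hws huw

-- Unlike `G.induce X`, this keeps the vertex type, so its walks are walks of `G` via `Walk.mapLe`.
def restrict (G : SimpleGraph V) (X : Set V) : SimpleGraph V where
  Adj a b := a ∈ X ∧ b ∈ X ∧ G.Adj a b
  symm := ⟨fun _ _ h => ⟨h.2.1, h.1, h.2.2.symm⟩⟩
  loopless := ⟨fun _ h => h.2.2.ne rfl⟩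

section restrict

variable {X Y : Set V} {a b : V}

theorem restrict_adj : (G.restrict X).Adj a b ↔ a ∈ X ∧ b ∈ X ∧ G.Adj a b := Iff.rfl

theorem restrict_le : G.restrict X ≤ G := fun _ _ h => h.2.2

theorem restrict_mono (h : X ⊆ Y) : G.restrict X ≤ G.restrict Y :=
  fun _ _ hab => ⟨h hab.1, h hab.2.1, hab.2.2⟩

theorem Walk.mem_of_mem_support_restrict {u w x : V} (p : (G.restrict X).Walk u w) (hu : u ∈ X)
    (hx : x ∈ p.support) : x ∈ X := by
  induction p with
  | nil => rw [Walk.support_nil, List.mem_singleton] at hx; rwa [hx]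
  | cons h p ih =>
    rcases List.mem_cons.mp (Walk.support_cons h p ▸ hx) with rfl | hx
    exacts [hu, ih h.2.1 hx]

end restrict

theorem Walk.isChordless_of_length_eq_dist {u w : V} (p : G.Walk u w)
    (hp : p.length = G.dist u w) : p.IsChordless := by
  classical
  rw [Walk.isChordless_iff_forall_mem_edges]
  induction p with
  | nil =>
    intro x y hx hy hxy
    simp only [Walk.support_nil, List.mem_singleton] at hx hy
    exact absurd (hx.trans hy.symm) hxy.ne
  | @cons u v w h p ih =>
    have hp' : p.length = G.dist v w := length_eq_dist_of_subwalk hp (Walk.isSubwalk_cons p h)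
    -- a neighbour `y` of `u` further along `p` would give the shortcut `u → y ⇝ w`
    have head : ∀ {y}, y ∈ p.support → G.Adj u y → s(u, y) ∈ (Walk.cons h p).edges := by
      intro y hy huy
      have hshort := dist_le (Walk.cons huy (p.dropUntil y hy))
      have hsplit := congrArg Walk.length (p.take_spec hy)
      rw [Walk.length_append] at hsplit
      rw [Walk.length_cons] at hp hshort
      have hvy := Walk.eq_of_length_eq_zero (p := p.takeUntil y hy) (by omega)
      simp [hvy]
    intro x y hx hy hxy
    rw [Walk.support_cons, List.mem_cons] at hx hy
    rcases hx with rfl | hx <;> rcases hy with rfl | hy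
    · exact absurd rfl hxy.ne
    · exact head hy hxy
    · exact Sym2.eq_swap ▸ head hx hxy.symm
    · exact List.mem_cons_of_mem _ (ih hp' hx hy hxy)

theorem IsChordal.not_isChordless (hG : G.IsChordal) {v : V} {c : G.Walk v v} (hc : c.IsCycle)
    (h4 : 4 ≤ c.length) : ¬c.IsChordless := by
  obtain ⟨x, y, hx, hy, hxy, hnot⟩ := hG v c hc h4
  exact fun h => hnot (Walk.adj_toSubgraph_iff_mem_edges.mpr (h.mem_edges hx hy hxy))

theorem IsChordal.adj_of_reachable_restrict (hG : G.IsChordal) {v s s' : V} {X : Set V}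
    (hvX : v ∉ X) (hX : ∀ x ∈ X, G.Adj v x → x = s ∨ x = s') (hs : G.Adj v s)
    (hs' : G.Adj v s') (hne : s ≠ s') (hr : (G.restrict X).Reachable s s') : G.Adj s s' := by
  by_contra hnadj
  obtain ⟨p, hp, hlen⟩ := hr.exists_path_of_dist
  have hsX : s ∈ X := by
    cases p with
    | nil => exact absurd rfl hne
    | cons h _ => exact h.1
  have hpX : ∀ x ∈ p.support, x ∈ X := fun x hx => p.mem_of_mem_support_restrict hsX hx
  have hvp : v ∉ p.support := fun h => hvX (hpX v h)
  have hlen2 : 2 ≤ p.length := by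
    by_contra! h
    interval_cases hl : p.length
    · exact hne (Walk.eq_of_length_eq_zero hl)
    · exact hnadj (Walk.adj_of_length_eq_one hl).2.2
  let c : G.Walk v v := Walk.cons hs ((p.mapLe restrict_le).concat hs'.symm)
  have hc : c.IsCycle := by
    refine (Walk.cons_isCycle_iff _ _).mpr
      ⟨(hp.mapLe _).concat (by rwa [Walk.support_mapLe_eq_support]) _, ?_⟩
    simp only [Walk.edges_concat, Walk.edges_mapLe_eq_edges, List.concat_eq_append,
      List.mem_append, List.mem_singleton, Sym2.eq, Sym2.rel_iff', not_or]
    exact ⟨fun h => hvp (p.fst_mem_support_of_mem_edges h), by grind [hs.ne]⟩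
  refine hG.not_isChordless hc (by simp [c]; omega) ?_
  have hpc := p.isChordless_of_length_eq_dist hlen
  have hc_edges : ∀ e ∈ p.edges, e ∈ c.edges := fun e he => by simp [c, he]
  have hv_edges : ∀ y ∈ p.support, G.Adj v y → s(v, y) ∈ c.edges := fun y hy hvy => by
    rcases hX y (hpX y hy) hvy with rfl | rfl <;> simp [c, Sym2.eq_swap]
  rw [Walk.isChordless_iff_forall_mem_edges]
  intro x y hx hy hxy
  simp only [c, Walk.support_cons, Walk.support_concat, Walk.support_mapLe_eq_support,
    List.mem_cons, List.mem_append, List.not_mem_nil, or_false] at hx hy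
  rcases hx with rfl | hx | rfl <;> rcases hy with rfl | hy | rfl
  all_goals first
    | exact absurd rfl hxy.ne
    | exact hv_edges _ hy hxy
    | exact Sym2.eq_swap ▸ hv_edges _ hx hxy.symm
    | exact hc_edges _ (hpc.mem_edges hx hy ⟨hpX x hx, hpX y hy, hxy⟩)

def IsSimplicialIn (G : SimpleGraph V) (A : Set V) (x : V) : Prop :=
  G.IsClique (A ∩ G.neighborSet x)

theorem exists_isSimplicialIn_notMem_of_isClique {B S : Set V}
    (hB : ∀ a ∈ B, ∀ b ∈ B, a ≠ b → ¬G.Adj a b →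
      ∃ x ∈ B, x ≠ a ∧ ¬G.Adj a x ∧ G.IsSimplicialIn B x)
    (hS : G.IsClique S) {w : V} (hw : w ∈ B) (hwS : w ∉ S) :
    ∃ x ∈ B, x ∉ S ∧ G.IsSimplicialIn B x := by
  by_cases hBc : G.IsClique B
  · exact ⟨w, hw, hwS, hBc.subset Set.inter_subset_left⟩
  obtain ⟨a, ha, b, hb, hab, hnab⟩ : ∃ a ∈ B, ∃ b ∈ B, a ≠ b ∧ ¬G.Adj a b := by
    simpa [IsClique, Set.Pairwise] using hBc
  obtain ⟨x, hx, hxa, hax, hxs⟩ := hB a ha b hb hab hnab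
  obtain ⟨y, hy, hyx, hxy, hys⟩ := hB x hx a ha hxa (fun h => hax h.symm)
  by_cases hxS : x ∈ S
  · exact ⟨y, hy, fun hyS => hxy (hS hxS hyS hyx.symm), hys⟩
  · exact ⟨x, hx, hxS, hxs⟩

theorem IsChordal.adj_of_adj_of_reachable_restrict (hG : G.IsChordal) {v s s' c c' : V}
    {D : Set V} (hD : ∀ x ∈ D, x ≠ v ∧ ¬G.Adj v x) (hs : G.Adj v s) (hs' : G.Adj v s')
    (hne : s ≠ s') (hc : c ∈ D) (hc' : c' ∈ D) (hcs : G.Adj c s) (hcs' : G.Adj c' s')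
    (hcc' : (G.restrict D).Reachable c c') : G.Adj s s' := by
  have hDX : D ⊆ insert s (insert s' D) := fun x hx => by simp [hx]
  refine hG.adj_of_reachable_restrict (X := insert s (insert s' D)) ?_ ?_ hs hs' hne ?_
  · simp only [Set.mem_insert_iff, not_or]
    exact ⟨hs.ne, hs'.ne, fun h => (hD v h).1 rfl⟩
  · rintro x (rfl | rfl | hx) hvx
    exacts [Or.inl rfl, Or.inr rfl, absurd hvx (hD x hx).2]
  · exact ((restrict_adj.mpr ⟨by simp, hDX hc, hcs.symm⟩).reachable.trans
      (hcc'.mono (restrict_mono hDX))).trans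
      (restrict_adj.mpr ⟨hDX hc', by simp, hcs'⟩).reachable

theorem IsChordal.exists_isSimplicialIn_nonadj (hG : G.IsChordal) (A : Finset V) {v w : V}
    (hv : v ∈ A) (hw : w ∈ A) (hvw : v ≠ w) (hnadj : ¬G.Adj v w) :
    ∃ x ∈ A, x ≠ v ∧ ¬G.Adj v x ∧ G.IsSimplicialIn A x := by
  classical
  induction A using Finset.strongInduction generalizing v w with
  | H A ih =>
    -- `C` is the component of `w` in `A` minus the closed neighbourhood of `v`, `S` its boundary
    set D : Finset V := {x ∈ A | x ≠ v ∧ ¬G.Adj v x}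
    set C : Finset V := {x ∈ D | (G.restrict D).Reachable w x}
    set S : Finset V := {s ∈ A | s ∉ C ∧ ∃ c ∈ C, G.Adj c s}
    have hwC : w ∈ C := by simp [C, D, hw, hvw.symm, hnadj]
    have hCD : ∀ {c}, c ∈ C → c ∈ D := fun hc => (mem_filter.mp hc).1
    have hCv : ∀ {c}, c ∈ C → c ≠ v ∧ ¬G.Adj v c := fun hc => (mem_filter.mp (hCD hc)).2
    have hSv : ∀ {s}, s ∈ S → G.Adj v s := by
      intro s hs
      obtain ⟨hsA, hsC, c, hc, hcs⟩ := mem_filter.mp hs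
      by_contra hvs
      have hsD : s ∈ D := mem_filter.mpr ⟨hsA, fun h => (hCv hc).2 (h ▸ hcs.symm), hvs⟩
      exact hsC (mem_filter.mpr ⟨hsD, (mem_filter.mp hc).2.trans
        (restrict_adj.mpr ⟨hCD hc, hsD, hcs⟩).reachable⟩)
    have hS : G.IsClique (S : Set V) := by
      intro s hs s' hs' hne
      obtain ⟨-, -, c, hc, hcs⟩ := mem_filter.mp hs
      obtain ⟨-, -, c', hc', hcs'⟩ := mem_filter.mp hs'
      exact hG.adj_of_adj_of_reachable_restrict (D := D) (fun x hx => (mem_filter.mp hx).2)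
        (hSv hs) (hSv hs') hne (hCD hc) (hCD hc') hcs hcs'
        ((mem_filter.mp hc).2.symm.trans (mem_filter.mp hc').2)
    have hBA : C ∪ S ⊂ A := by
      refine (ssubset_iff_of_subset (union_subset (fun c hc => (mem_filter.mp (hCD hc)).1)
        (filter_subset _ _))).mpr ⟨v, hv, ?_⟩
      rw [mem_union, not_or]
      exact ⟨fun h => (hCv h).1 rfl, fun h => (hSv h).ne rfl⟩
    obtain ⟨x, hxB, hxS, hx⟩ := exists_isSimplicialIn_notMem_of_isClique
      (fun a ha b hb hab hnab => ih _ hBA ha hb hab hnab) hS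
      (mem_union_left S hwC) (fun h => (mem_filter.mp h).2.1 hwC)
    have hxC : x ∈ C := by simpa [hxS] using hxB
    refine ⟨x, (mem_filter.mp (hCD hxC)).1, (hCv hxC).1, (hCv hxC).2, hx.subset ?_⟩
    rintro y ⟨hyA, hxy⟩
    refine ⟨?_, hxy⟩
    by_cases hyC : y ∈ C
    · exact mem_union_left S hyC
    · exact mem_union_right C (mem_filter.mpr ⟨hyA, hyC, x, hxC, hxy⟩)

theorem IsChordal.exists_isSimplicialIn (hG : G.IsChordal) {A : Finset V} (hA : A.Nonempty) :
    ∃ x ∈ A, G.IsSimplicialIn A x := by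
  by_cases hAc : G.IsClique (A : Set V)
  · obtain ⟨x, hx⟩ := hA
    exact ⟨x, hx, hAc.subset Set.inter_subset_left⟩
  obtain ⟨a, ha, b, hb, hab, hnab⟩ : ∃ a ∈ A, ∃ b ∈ A, a ≠ b ∧ ¬G.Adj a b := by
    simpa [IsClique, Set.Pairwise] using hAc
  obtain ⟨x, hx, -, -, hxs⟩ := hG.exists_isSimplicialIn_nonadj A ha hb hab hnab
  exact ⟨x, hx, hxs⟩

theorem IsChordal.exists_injOn_isClique_later (hG : G.IsChordal) (A : Finset V) :
    ∃ f : V → ℕ, Set.InjOn f A ∧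
      ∀ a ∈ A, G.IsClique {b | b ∈ A ∧ G.Adj a b ∧ f a < f b} := by
  classical
  induction A using Finset.strongInduction with
  | H A ih =>
    rcases A.eq_empty_or_nonempty with rfl | hA
    · exact ⟨0, by simp, by simp⟩
    obtain ⟨x, hxA, hx⟩ := hG.exists_isSimplicialIn hA
    obtain ⟨f, hf_inj, hf⟩ := ih _ (erase_ssubset hxA)
    -- eliminate `x` first, then the rest of `A` in the order `f`
    refine ⟨fun y => if y = x then 0 else f y + 1, ?_, fun a ha => ?_⟩
    · intro y hy z hz hyz
      by_cases hyx : y = x <;> by_cases hzx : z = x <;>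
        simp only [hyx, hzx, if_true, if_false] at hyz
      · exact hyx.trans hzx.symm
      · omega
      · omega
      · exact hf_inj (mem_erase.mpr ⟨hyx, hy⟩) (mem_erase.mpr ⟨hzx, hz⟩) (by omega)
    by_cases hax : a = x
    · subst hax
      refine hx.subset fun b hb => ?_
      exact ⟨hb.1, hb.2.1⟩
    · refine (hf a (mem_erase.mpr ⟨hax, ha⟩)).subset fun b ⟨hb, hab, hlt⟩ => ?_
      have hbx : b ≠ x := by rintro rfl; simp at hlt
      simp only [hax, hbx, if_false] at hlt
      exact ⟨mem_erase.mpr ⟨hbx, hb⟩, hab, by omega⟩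

section Order

variable {α : Type*} [LinearOrder α] {f : V → α}

def IsPerfectEliminationOrder (G : SimpleGraph V) (f : V → α) : Prop :=
  Function.Injective f ∧ ∀ a, G.IsClique {b | G.Adj a b ∧ f a < f b}

theorem IsChordal.exists_isPerfectEliminationOrder [Finite V] (hG : G.IsChordal) :
    ∃ f : V → ℕ, G.IsPerfectEliminationOrder f := by
  have := Fintype.ofFinite V
  obtain ⟨f, hf_inj, hf⟩ := hG.exists_injOn_isClique_later univ
  exact ⟨f, by simpa using hf_inj, fun a => by simpa using hf a (mem_univ a)⟩

def orderedSquare (G : SimpleGraph V) (f : V → α) : SimpleGraph V where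
  Adj u w := u ≠ w ∧
    (G.Adj u w ∨ ∃ z, G.Adj u z ∧ G.Adj z w ∧ (f z < f u ∨ f z < f w))
  symm := ⟨fun _ _ h => ⟨h.1.symm, h.2.imp (fun h => h.symm) fun ⟨z, huz, hzw, hz⟩ =>
    ⟨z, hzw.symm, huz.symm, hz.symm⟩⟩⟩
  loopless := ⟨fun _ h => h.1 rfl⟩

theorem orderedSquare_adj {u w : V} : (G.orderedSquare f).Adj u w ↔
    u ≠ w ∧ (G.Adj u w ∨ ∃ z, G.Adj u z ∧ G.Adj z w ∧ (f z < f u ∨ f z < f w)) :=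
  Iff.rfl

namespace IsPerfectEliminationOrder

theorem adj (hf : G.IsPerfectEliminationOrder f) {a b c : V} (hab : G.Adj a b)
    (hac : G.Adj a c) (hb : f a < f b) (hc : f a < f c) (hbc : b ≠ c) : G.Adj b c :=
  hf.2 a ⟨hab, hb⟩ ⟨hac, hc⟩ hbc

theorem isClique_insert_later (hf : G.IsPerfectEliminationOrder f) (a : V) :
    G.IsClique (insert a {b | G.Adj a b ∧ f a < f b}) :=
  (hf.2 a).insert fun _ hb _ => hb.1

theorem orderedSquare_adj_of_cliques (hf : G.IsPerfectEliminationOrder f) {K L : Set V}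
    (hK : G.IsClique K) (hL : G.IsClique L) (hKL : Disjoint K L) {x y u w : V}
    (hx : x ∈ K) (hy : y ∈ L) (hxy : G.Adj x y) (hu : u ∈ K) (hxu : f x ≤ f u)
    (hw : w ∈ L) (hyw : f y ≤ f w) :
    (G.orderedSquare f).Adj u w := by
  have hne : ∀ {a b}, a ∈ K → b ∈ L → a ≠ b := fun ha hb => hKL.ne_of_mem ha hb
  refine orderedSquare_adj.mpr ⟨hne hu hw, ?_⟩
  have key : G.Adj u y ∨ G.Adj x w := by
    rcases eq_or_ne x u with rfl | hxu'
    · exact Or.inl hxy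
    rcases eq_or_ne y w with rfl | hyw'
    · exact Or.inr hxy
    rcases (hf.1.ne (hne hx hy)).lt_or_gt with h | h
    · exact Or.inl (hf.adj (hK hx hu hxu') hxy (hxu.lt_of_ne (hf.1.ne hxu')) h (hne hu hy))
    · exact Or.inr
        (hf.adj hxy.symm (hL hy hw hyw') h (hyw.lt_of_ne (hf.1.ne hyw')) (hne hx hw))
  rcases key with huy | hxw
  · rcases eq_or_ne y w with rfl | hyw'
    · exact Or.inl huy
    · exact Or.inr ⟨y, huy, hL hy hw hyw', Or.inr (hyw.lt_of_ne (hf.1.ne hyw'))⟩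
  · rcases eq_or_ne x u with rfl | hxu'
    · exact Or.inl hxw
    · exact Or.inr ⟨x, (hK hx hu hxu').symm, hxw, Or.inl (hxu.lt_of_ne (hf.1.ne hxu'))⟩

theorem orderedSquare_adj_later (hf : G.IsPerfectEliminationOrder f) {u w : V}
    (h : (G.orderedSquare f).Adj u w) (hw : f u < f w) :
    (G.Adj u w ∧ f u < f w) ∨ ∃ z, (G.Adj u z ∧ f u < f z) ∧ G.Adj z w ∧ f z < f w := by
  obtain ⟨huw, huw' | ⟨z, huz, hzw, hz⟩⟩ := orderedSquare_adj.mp h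
  · exact Or.inl ⟨huw', hw⟩
  rcases (hf.1.ne huz.ne).lt_or_gt with huz' | hzu
  · exact Or.inr ⟨z, ⟨huz, huz'⟩, hzw, hz.resolve_left huz'.not_gt⟩
  · exact Or.inl ⟨hf.adj huz.symm hzw hzu (hzu.trans hw) huw, hw⟩

theorem card_union_biUnion_later_le [Fintype V] [DecidableEq V] [DecidableRel G.Adj]
    (hf : G.IsPerfectEliminationOrder f) {t : ℕ} (hcf : G.CliqueFree (t + 1)) {Z : Finset V}
    (hZ : G.IsClique (Z : Set V)) :
    #(Z ∪ Z.biUnion fun z => {w | G.Adj z w ∧ f z < f w}) ≤ ∑ i ∈ range #Z, (t - i) := by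
  induction Z using Finset.induction_on_min_value f with
  | empty => simp
  | insert a Z haZ ha_min ih =>
    set N : V → Finset V := fun z => {w | G.Adj z w ∧ f z < f w}
    rw [coe_insert] at hZ
    have hZN : Z ⊆ insert a (N a) := by
      intro z hz
      have haz : a ≠ z := (ne_of_mem_of_not_mem hz haZ).symm
      exact mem_insert_of_mem <| mem_filter.mpr ⟨mem_univ z,
        hZ (Set.mem_insert a _) (Set.mem_insert_of_mem a hz) haz,
        (ha_min z hz).lt_of_ne (hf.1.ne haz)⟩
    have hsub : insert a Z ∪ (insert a Z).biUnion N ⊆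
        (Z ∪ Z.biUnion N) ∪ (insert a (N a) \ Z) := by
      intro x
      simp only [mem_union, mem_insert, mem_biUnion, mem_sdiff]
      grind
    have hclique : #(insert a (N a)) ≤ t := by
      refine IsClique.card_le_of_cliqueFree ?_ hcf
      simpa [N, coe_insert, coe_filter] using hf.isClique_insert_later a
    have := card_le_card hsub
    have := card_union_le (Z ∪ Z.biUnion N) (insert a (N a) \ Z)
    have := card_sdiff_of_subset hZN
    have := ih (hZ.subset (Set.subset_insert a _))
    rw [card_insert_of_notMem haZ, sum_range_succ]
    omega

end IsPerfectEliminationOrder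

theorem IsPerfectEliminationOrder.colorable_orderedSquare [Fintype V]
    (hf : G.IsPerfectEliminationOrder f) {t : ℕ} (hcf : G.CliqueFree (t + 1)) :
    (G.orderedSquare f).Colorable ((t + 1).choose 2) := by
  classical
  refine colorable_of_forall_card_later_lt hf.1 fun u => ?_
  set N : V → Finset V := fun z => {w | G.Adj z w ∧ f z < f w}
  set Z := insert u (N u)
  have hZ : G.IsClique (Z : Set V) := by
    simpa [Z, N, coe_insert, coe_filter] using hf.isClique_insert_later u
  have hsub :
      ({w | (G.orderedSquare f).Adj u w ∧ f u < f w} : Finset V) ⊂ Z ∪ Z.biUnion N := by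
    refine (ssubset_iff_of_subset fun w hw => ?_).mpr ⟨u, mem_union_left _ (mem_insert_self u _),
      fun hu => (orderedSquare_adj.mp (mem_filter.mp hu).2.1).1 rfl⟩
    obtain ⟨hadj, hlt⟩ := (mem_filter.mp hw).2
    rcases hf.orderedSquare_adj_later hadj hlt with hw' | ⟨z, hz, hw'⟩
    · exact mem_union_left _ (mem_insert_of_mem (mem_filter.mpr ⟨mem_univ w, hw'⟩))
    · exact mem_union_right _ (mem_biUnion.mpr ⟨z, mem_insert_of_mem (mem_filter.mpr
        ⟨mem_univ z, hz⟩), mem_filter.mpr ⟨mem_univ w, hw'⟩⟩)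
  calc #{w | (G.orderedSquare f).Adj u w ∧ f u < f w} < #(Z ∪ Z.biUnion N) := card_lt_card hsub
    _ ≤ ∑ i ∈ range #Z, (t - i) := hf.card_union_biUnion_later_le hcf hZ
    _ ≤ ∑ i ∈ range t, (t - i) :=
      sum_le_sum_of_subset (range_subset_range.mpr (hZ.card_le_of_cliqueFree hcf))
    _ = (t + 1).choose 2 := Nat.sum_range_sub_eq_choose_two t

end Order

end SimpleGraph

/-- If `G` is a finite chordal graph with clique number at most `t`, then
the chromatic number of the adjacent-cliques graph of `G` is at most `(t+1) choose 2`. -/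
theorem chromaticNumber_acGraph_le {V : Type*} [Fintype V] (G : SimpleGraph V)
    (t : ℕ) (hch : G.IsChordal) (hcf : G.CliqueFree (t + 1)) :
    G.acGraph.chromaticNumber ≤ ((t + 1).choose 2 : ℕ) := by
  obtain ⟨f, hf⟩ := hch.exists_isPerfectEliminationOrder
  choose last hlast_mem hlast_max using
    fun K : {K : Finset V // K.Nonempty ∧ G.IsClique (K : Set V)} => K.1.exists_max_image f K.2.1
  let φ : G.acGraph →g G.orderedSquare f :=
    ⟨last, fun {K L} ⟨hKL, x, hx, y, hy, hxy⟩ =>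
      hf.orderedSquare_adj_of_cliques K.2.2 L.2.2 (Finset.disjoint_coe.mpr hKL) hx hy hxy
        (hlast_mem K) (hlast_max K x hx) (hlast_mem L) (hlast_max L y hy)⟩
  exact ((hf.colorable_orderedSquare hcf).of_hom φ).chromaticNumber_le
end

section
/- Let G be a finite connected chordal graph and let x be any vertex of G. Then G is shadow complete with respect to x; that is, for every non-negative integer ℓ and every connected component C of the subgraph of G induced by the vertices at distance greater than ℓ from x, the set of vertices at distance exactly ℓ from x that have a neighbour in C induces a complete graph. -/
open SimpleGraph

/-! If `w₁ ≠ w₂` were not adjacent, take a shortest `w₁`–`w₂` path through the vertices farther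
than `ℓ` from `x` and a shortest one through the vertices closer than `ℓ`. Both are chordless, so
the cycle they form, of length at least 4, can only have a chord joining a far vertex to a near
one; but the distances to `x` of adjacent vertices differ by at most 1. -/

namespace SimpleGraph

variable {V : Type*} {G : SimpleGraph V} {u v w : V}

namespace Walk

lemma exists_support_subset_length_lt_of_adj_getVert {p : G.Walk u v} {i j : ℕ}
    (hij : i + 1 < j) (hj : j ≤ p.length) (hadj : G.Adj (p.getVert i) (p.getVert j)) :
    ∃ q : G.Walk u v, q.support ⊆ p.support ∧ q.length < p.length := by
  refine ⟨(p.take i).append (cons hadj (p.drop j)), fun w hw ↦ ?_, by simp; omega⟩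
  simp only [support_append, support_cons, List.tail_cons, List.mem_append, support_take,
    drop_support_eq_support_drop_min] at hw
  rcases hw with hw | hw
  · exact List.mem_of_mem_take hw
  · exact List.mem_of_mem_drop hw

lemma IsChord.exists_support_subset_length_lt {p : G.Walk u v} {e : Sym2 V} (he : p.IsChord e) :
    ∃ q : G.Walk u v, q.support ⊆ p.support ∧ q.length < p.length := by
  induction e using Sym2.ind with | _ a b => ?_
  obtain ⟨hab, hnot, ha, hb⟩ := isChord_sym2Mk.mp he
  obtain ⟨i, rfl, hi⟩ := mem_support_iff_exists_getVert.mp ha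
  obtain ⟨j, rfl, hj⟩ := mem_support_iff_exists_getVert.mp hb
  have hne : i ≠ j := fun h ↦ hab.ne (h ▸ rfl)
  have hfar : i + 1 ≠ j ∧ j + 1 ≠ i := by
    constructor <;> rintro rfl
    · exact hnot ((mk_mem_edges_iff_exists p).mpr ⟨i, by omega, rfl⟩)
    · exact hnot ((mk_mem_edges_iff_exists p).mpr ⟨j, by omega, Sym2.eq_swap⟩)
  rcases Nat.lt_or_gt_of_ne hne with h | h
  · exact exists_support_subset_length_lt_of_adj_getVert (by omega) hj hab
  · exact exists_support_subset_length_lt_of_adj_getVert (by omega) hi hab.symm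

theorem exists_isPath_isChordless_of_support_subset {s : Set V}
    (p : G.Walk u v) (hp : ∀ w ∈ p.support, w ∈ s) :
    ∃ q : G.Walk u v, q.IsPath ∧ q.IsChordless ∧ ∀ w ∈ q.support, w ∈ s := by
  classical
  induction h : p.length using Nat.strong_induction_on generalizing p with | _ n ih => ?_
  by_cases hc : p.bypass.IsChordless
  · exact ⟨p.bypass, p.bypass_isPath, hc, fun w hw ↦ hp w (p.support_bypass_subset_support hw)⟩
  · obtain ⟨e, he⟩ : ∃ e, p.bypass.IsChord e := by simpa [IsChordless] using hc
    obtain ⟨q, hqs, hql⟩ := he.exists_support_subset_length_lt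
    exact ih q.length (h ▸ hql.trans_le p.length_bypass_le_length) q
      (fun w hw ↦ hp w (p.support_bypass_subset_support (hqs hw))) rfl

lemma dist_lt_of_mem_support_of_length_eq_dist {p : G.Walk u v} (hp : p.length = G.dist u v)
    (hw : w ∈ p.support) (hwv : w ≠ v) : G.dist u w < G.dist u v := by
  classical
  rw [← hp, ← length_eq_dist_of_subwalk hp (p.isSubwalk_takeUntil hw)]
  exact length_takeUntil_lt_length hw hwv

end Walk

open Walk

theorem IsChordal.exists_adj_of_isChordless (hch : G.IsChordal) (hne : u ≠ v)
    (hnadj : ¬G.Adj u v) {P Q : G.Walk u v} (hP : P.IsPath) (hQ : Q.IsPath)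
    (hPc : P.IsChordless) (hQc : Q.IsChordless)
    (hPQ : ∀ w ∈ P.support, w ∈ Q.support → w = u ∨ w = v) :
    ∃ a ∈ P.support, a ∉ Q.support ∧ ∃ b ∈ Q.support, b ∉ P.support ∧ G.Adj a b := by
  have hlen (p : G.Walk u v) : 2 ≤ p.length :=
    (p.reachable.one_lt_dist_of_ne_of_not_adj hne hnadj).trans_le (dist_le p)
  have hdisj : P.support.tail.Disjoint Q.reverse.support.tail := by
    intro w hwP hwQ
    have hPu : u ∉ P.support.tail := (List.nodup_cons.mp (P.cons_tail_support ▸ hP.support_nodup)).1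
    have hQv : v ∉ Q.reverse.support.tail :=
      (List.nodup_cons.mp (Q.reverse.cons_tail_support ▸ hQ.reverse.support_nodup)).1
    have hwQ' : w ∈ Q.support := by simpa using List.mem_of_mem_tail hwQ
    rcases hPQ w (List.mem_of_mem_tail hwP) hwQ' with rfl | rfl
    · exact hPu hwP
    · exact hQv hwQ
  have hcyc : (P.append Q.reverse).IsCycle := hP.isCycle_append hQ.reverse hdisj (Or.inl (hlen P))
  obtain ⟨a, b, ha, hb, hab, hchord⟩ :=
    hch u _ hcyc (by simp only [length_append, length_reverse]; linarith [hlen P, hlen Q])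
  simp only [toSubgraph_append, toSubgraph_reverse, Subgraph.sup_adj, not_or,
    adj_toSubgraph_iff_mem_edges, mem_support_append_iff, support_reverse, List.mem_reverse]
    at ha hb hchord
  by_cases haQ : a ∈ Q.support
  · by_cases hbQ : b ∈ Q.support
    · exact absurd (hQc.mem_edges haQ hbQ hab) hchord.2
    · have hbP := hb.resolve_right hbQ
      have haP : a ∉ P.support := fun haP ↦ hchord.1 (hPc.mem_edges haP hbP hab)
      exact ⟨b, hbP, hbQ, a, haQ, haP, hab.symm⟩
  · have haP := ha.resolve_right haQ
    have hbP : b ∉ P.support := fun hbP ↦ hchord.1 (hPc.mem_edges haP hbP hab)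
    exact ⟨a, haP, haQ, b, hb.resolve_left hbP, hbP, hab⟩

theorem IsChordal.exists_adj_of_isChordless_of_disjoint (hch : G.IsChordal) (hne : u ≠ v)
    (hnadj : ¬G.Adj u v) {s t : Set V} (hst : Disjoint s t) {P Q : G.Walk u v} (hP : P.IsPath)
    (hQ : Q.IsPath) (hPc : P.IsChordless) (hQc : Q.IsChordless)
    (hPs : ∀ w ∈ P.support, w = u ∨ w = v ∨ w ∈ s)
    (hQt : ∀ w ∈ Q.support, w = u ∨ w = v ∨ w ∈ t) :
    ∃ a ∈ s, ∃ b ∈ t, G.Adj a b := by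
  have hPQ (w : V) (hwP : w ∈ P.support) (hwQ : w ∈ Q.support) : w = u ∨ w = v := by
    have := hst.notMem_of_mem_left (a := w)
    have := hPs w hwP
    have := hQt w hwQ
    tauto
  obtain ⟨a, haP, haQ, b, hbQ, hbP, hab⟩ := hch.exists_adj_of_isChordless hne hnadj hP hQ hPc hQc hPQ
  have ha : a ∈ s := by
    rcases hPs a haP with rfl | rfl | ha
    · exact (haQ Q.start_mem_support).elim
    · exact (haQ Q.end_mem_support).elim
    · exact ha
  have hb : b ∈ t := by
    rcases hQt b hbQ with rfl | rfl | hb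
    · exact (hbP P.start_mem_support).elim
    · exact (hbP P.end_mem_support).elim
    · exact hb
  exact ⟨a, ha, b, hb, hab⟩

lemma exists_walk_of_adj_of_reachable_induce {s : Set V} {a b : s} (ha : G.Adj u a)
    (hb : G.Adj v b) (h : (G.induce s).Reachable a b) :
    ∃ p : G.Walk u v, ∀ w ∈ p.support, w = u ∨ w = v ∨ w ∈ s := by
  obtain ⟨W⟩ := h
  refine ⟨cons ha ((W.map ⟨Subtype.val, id⟩).concat hb.symm), fun w hw ↦ ?_⟩
  simp only [support_cons, support_concat, Walk.support_map, List.mem_cons,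
    List.mem_append, List.mem_map, List.not_mem_nil, or_false] at hw
  rcases hw with rfl | ⟨a, -, rfl⟩ | rfl
  · exact .inl rfl
  · exact .inr (.inr a.2)
  · exact .inr (.inl rfl)

lemma Connected.exists_walk_dist_lt (hconn : G.Connected) {x : V} {ℓ : ℕ}
    (hu : G.dist x u = ℓ) (hv : G.dist x v = ℓ) :
    ∃ p : G.Walk u v, ∀ w ∈ p.support, w = u ∨ w = v ∨ G.dist x w < ℓ := by
  obtain ⟨p, hp⟩ := hconn.exists_walk_length_eq_dist x u
  obtain ⟨q, hq⟩ := hconn.exists_walk_length_eq_dist x v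
  refine ⟨p.reverse.append q, fun w hw ↦ ?_⟩
  rw [mem_support_append_iff, support_reverse, List.mem_reverse] at hw
  by_cases hwu : w = u
  · exact .inl hwu
  by_cases hwv : w = v
  · exact .inr (.inl hwv)
  rcases hw with hw | hw
  · exact .inr (.inr (hu ▸ dist_lt_of_mem_support_of_length_eq_dist hp hw hwu))
  · exact .inr (.inr (hv ▸ dist_lt_of_mem_support_of_length_eq_dist hq hw hwv))

end SimpleGraph

theorem shadowComplete_of_isChordal_general {V : Type*} (G : SimpleGraph V)
    (hch : G.IsChordal) (hconn : G.Connected) (x : V) (ℓ : ℕ)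
    (w₁ w₂ : V) (hw₁ : G.dist x w₁ = ℓ) (hw₂ : G.dist x w₂ = ℓ)
    (y₁ y₂ : {v : V // ℓ < G.dist x v})
    (hadj₁ : G.Adj w₁ y₁) (hadj₂ : G.Adj w₂ y₂)
    (hreach : (G.induce {v : V | ℓ < G.dist x v}).Reachable y₁ y₂) :
    w₁ = w₂ ∨ G.Adj w₁ w₂ := by
  by_contra! ⟨hne, hnadj⟩
  obtain ⟨P₀, hP₀⟩ := exists_walk_of_adj_of_reachable_induce hadj₁ hadj₂ hreach
  obtain ⟨Q₀, hQ₀⟩ := hconn.exists_walk_dist_lt hw₁ hw₂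
  obtain ⟨P, hP, hPc, hPs⟩ := P₀.exists_isPath_isChordless_of_support_subset
    (s := insert w₁ (insert w₂ {v | ℓ < G.dist x v})) hP₀
  obtain ⟨Q, hQ, hQc, hQt⟩ := Q₀.exists_isPath_isChordless_of_support_subset
    (s := insert w₁ (insert w₂ {v | G.dist x v < ℓ})) hQ₀
  have hdisj : Disjoint {v | ℓ < G.dist x v} {v | G.dist x v < ℓ} :=
    Set.disjoint_left.mpr fun v (h₁ : ℓ < G.dist x v) (h₂ : G.dist x v < ℓ) ↦ by omega
  obtain ⟨a, ha : ℓ < G.dist x a, b, hb : G.dist x b < ℓ, hab⟩ :=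
    hch.exists_adj_of_isChordless_of_disjoint hne hnadj hdisj hP hQ hPc hQc hPs hQt
  rcases hab.diff_dist_adj (u := x) with h | h | h <;> omega

/-- A finite connected chordal graph is shadow complete with respect to any
vertex: if `w₁, w₂` are at distance exactly `ℓ` from `x` and each has a neighbour in one and
the same connected component of the subgraph induced by the vertices at distance `> ℓ`
from `x`, then `w₁ = w₂` or `w₁` and `w₂` are adjacent. -/
theorem shadowComplete_of_isChordal {V : Type*} [Fintype V] (G : SimpleGraph V)
    (hch : G.IsChordal) (hconn : G.Connected) (x : V) (ℓ : ℕ)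
    (w₁ w₂ : V) (hw₁ : G.dist x w₁ = ℓ) (hw₂ : G.dist x w₂ = ℓ)
    (y₁ y₂ : {v : V // ℓ < G.dist x v})
    (hadj₁ : G.Adj w₁ y₁) (hadj₂ : G.Adj w₂ y₂)
    (hreach : (G.induce {v : V | ℓ < G.dist x v}).Reachable y₁ y₂) :
    w₁ = w₂ ∨ G.Adj w₁ w₂ :=
  shadowComplete_of_isChordal_general G hch hconn x ℓ w₁ w₂ hw₁ hw₂ y₁ y₂ hadj₁ hadj₂ hreach
end

section
/- Let G be a finite connected chordal graph, let x be a vertex of G, and let u, v be vertices with d_G(u,x) = d_G(v,x) = ℓ for some positive integer ℓ. Suppose d_G(u,v) = p for some odd integer p ≥ 3, and let K_u (respectively K_v) be the set of ancestors of u (respectively v) in the level N^{ℓ−⌊p/2⌋}(x). Then K_u and K_v are adjacent cliques of G, i.e. they are disjoint and some vertex of K_u is adjacent in G to some vertex of K_v. -/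
/-!
Call `G.dist x w` the level of `w`. The heart of the proof is that in a chordal graph two distinct
vertices `a`, `b` on a level `m` that are joined by a walk running strictly above level `m` are
adjacent. By induction on `m`: shorten the walk to a chordless path `q`. If `q` had length at least
2, the parents `a'`, `b'` of `a`, `b` on level `m - 1` would see no inner vertex of `q`. A parent
adjacent to both ends closes `q` into a chordless cycle of length at least 4; otherwise `a' ≠ b'`
are adjacent by induction and `a' q b'` is a chordless cycle of length at least 5.

For `p = 2k + 1` the ancestors of `u` on level `ℓ - k` are the vertices of that level at distance
`k` from `u`. Two of them are joined through `u` above their level, so they are adjacent; `K_u` and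
`K_v` are disjoint since `d(u, v) > 2k`. For an edge between them, take the middle edge `c c'` of a
geodesic from `u` to `v`: `c` lies in `K_u` or is joined through `u`, above level `ℓ - k`, to any
vertex of `K_u`, and symmetrically for `c'`, so the key fact applies.
-/

open SimpleGraph

/-- `w` is an *ancestor* of `u` with respect to `x` if `w` lies on a strictly earlier
distance-level from `x` than `u` does, and there is a path from `u` to `w` whose length is
the difference of the two levels. -/
def SimpleGraph.IsAncestor {V : Type*} (G : SimpleGraph V) (x w u : V) : Prop :=
  G.dist x w < G.dist x u ∧
    ∃ q : G.Walk u w, q.IsPath ∧ q.length = G.dist x u - G.dist x w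

namespace SimpleGraph

variable {V : Type*} {G : SimpleGraph V}

namespace Walk

theorem exists_length_lt_of_not_isChordless {u v : V} (p : G.Walk u v)
    (hp : ¬ p.IsChordless) :
    ∃ q : G.Walk u v, q.length < p.length ∧ q.support ⊆ p.support := by
  simp only [isChordless_iff_forall_mem_edges, not_forall] at hp
  obtain ⟨a, b, ha, hb, hab, hnot⟩ := hp
  obtain ⟨i, rfl, hi⟩ := mem_support_iff_exists_getVert.mp ha
  obtain ⟨j, rfl, hj⟩ := mem_support_iff_exists_getVert.mp hb
  clear ha hb
  wlog hij : i < j generalizing i j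
  · refine this j hj i hi hab.symm (by rwa [Sym2.eq_swap]) (lt_of_le_of_ne (not_lt.mp hij) ?_)
    rintro rfl
    exact hab.ne rfl
  have hsucc : j ≠ i + 1 := by
    rintro rfl
    exact hnot ((mk_mem_edges_iff_exists p).mpr ⟨i, by omega, rfl⟩)
  refine ⟨(p.take i).append (cons hab (p.drop j)), ?_, ?_⟩
  · simp only [length_append, length_cons, take_length, drop_length]
    omega
  · intro w hw
    rw [mem_support_append_iff, support_cons, List.mem_cons] at hw
    rcases hw with hw | rfl | hw
    · exact (p.isSubwalk_take i).support_subset hw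
    · exact p.getVert_mem_support i
    · exact (p.isSubwalk_drop j).support_subset hw

theorem exists_isPath_isChordless_support_subset {u v : V} (p : G.Walk u v) :
    ∃ q : G.Walk u v, q.IsPath ∧ q.IsChordless ∧ q.support ⊆ p.support := by
  classical
  induction h : p.length using Nat.strong_induction_on generalizing p with
  | _ n ih =>
    by_cases hc : p.bypass.IsChordless
    · exact ⟨p.bypass, p.bypass_isPath, hc, p.support_bypass_subset_support⟩
    obtain ⟨q, hq, hqs⟩ := p.bypass.exists_length_lt_of_not_isChordless hc
    obtain ⟨r, hr, hrc, hrs⟩ := ih q.length (h ▸ hq.trans_le p.length_bypass_le_length) q rfl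
    exact ⟨r, hr, hrc, fun w hw => p.support_bypass_subset_support (hqs (hrs hw))⟩

theorem mem_support_concat_iff {u v w y : V} (p : G.Walk u v) (h : G.Adj v w) :
    y ∈ (p.concat h).support ↔ y ∈ p.support ∨ y = w := by
  simp [support_concat]

theorem IsChordless.concat {u v w : V} {p : G.Walk u v} (hp : p.IsChordless) (h : G.Adj v w)
    (hw : ∀ y ∈ p.support, G.Adj w y → y = v) : (p.concat h).IsChordless := by
  rw [isChordless_iff_forall_mem_edges] at hp ⊢
  intro a b ha hb hab
  rw [mem_support_concat_iff] at ha hb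
  rw [edges_concat, List.concat_eq_append, List.mem_append, List.mem_singleton]
  rcases ha with ha | rfl <;> rcases hb with hb | rfl
  · exact .inl (hp ha hb hab)
  · obtain rfl := hw a ha hab.symm
    exact .inr rfl
  · obtain rfl := hw b hb hab
    exact .inr Sym2.eq_swap
  · exact absurd rfl hab.ne

theorem dist_add_dist_le_length {u v y : V} (p : G.Walk u v) (hy : y ∈ p.support) :
    G.dist u y + G.dist y v ≤ p.length := by
  classical
  rw [← congrArg length (p.take_spec hy), length_append]
  exact add_le_add (dist_le _) (dist_le _)

end Walk

namespace Connected

variable (hc : G.Connected)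
include hc

theorem exists_dist_eq_and_dist_add_eq {x u : V} {m : ℕ} (hm : m ≤ G.dist x u) :
    ∃ a, G.dist x a = m ∧ G.dist u a + m = G.dist x u := by
  obtain ⟨p, hp⟩ := hc.exists_walk_length_eq_dist x u
  have hxa : G.dist x (p.getVert m) ≤ m := by
    simpa [Walk.take_length, hp, hm] using dist_le (p.take m)
  have hau : G.dist (p.getVert m) u ≤ G.dist x u - m := by
    simpa [Walk.drop_length, hp] using dist_le (p.drop m)
  have htri : G.dist x u ≤ G.dist x (p.getVert m) + G.dist (p.getVert m) u := hc.dist_triangle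
  refine ⟨p.getVert m, by omega, ?_⟩
  rw [dist_comm]
  omega

theorem lt_dist_of_mem_support {x u a y : V} {m : ℕ} (p : G.Walk u a)
    (hp : p.length + m ≤ G.dist x u) (hy : y ∈ p.support) (hya : y ≠ a) : m < G.dist x y := by
  have hsplit := p.dist_add_dist_le_length hy
  have htri : G.dist x u ≤ G.dist x y + G.dist y u := hc.dist_triangle
  have hpos := hc.pos_dist_of_ne hya
  rw [dist_comm (u := y) (v := u)] at htri
  omega

theorem exists_adj_dist_eq {x c : V} {m : ℕ} (h : G.dist x c = m + 1) :
    ∃ d, G.Adj d c ∧ G.dist x d = m := by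
  obtain ⟨d, hd, hcd⟩ := hc.exists_dist_eq_and_dist_add_eq (x := x) (u := c) (m := m) (by omega)
  exact ⟨d, (dist_eq_one_iff_adj.mp (by omega)).symm, hd⟩

theorem isAncestor_iff {x w u : V} :
    G.IsAncestor x w u ↔ G.dist x w < G.dist x u ∧ G.dist u w + G.dist x w = G.dist x u := by
  have htri : G.dist x u ≤ G.dist x w + G.dist w u := hc.dist_triangle
  rw [dist_comm (u := w)] at htri
  constructor
  · rintro ⟨hlt, q, -, hq⟩
    have := dist_le q
    omega
  · rintro ⟨hlt, heq⟩
    obtain ⟨q, hq, hql⟩ := hc.exists_path_of_dist u w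
    exact ⟨hlt, q, hq, by omega⟩

end Connected

namespace IsChordal

variable (hG : G.IsChordal) {a b : V} {q : G.Walk a b} (hq : q.IsPath) (hqc : q.IsChordless)
  (hlen : 2 ≤ q.length)
include hG hq hqc hlen

theorem exists_adj_of_isChordless_s9 {z : V} (hz : z ∉ q.support) (ha : G.Adj z a)
    (hb : G.Adj z b) : ∃ w ∈ q.support, w ≠ a ∧ w ≠ b ∧ G.Adj z w := by
  have hab : a ≠ b := by
    rintro rfl
    have := (Walk.isPath_iff_nil.mp hq).length_eq_zero
    omega
  have hcyc : (Walk.cons ha (q.concat hb.symm)).IsCycle := by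
    refine (Walk.cons_isCycle_iff _ ha).mpr ⟨hq.concat hz hb.symm, ?_⟩
    rw [Walk.edges_concat, List.concat_eq_append, List.mem_append, List.mem_singleton]
    rintro (he | he)
    · exact hz (q.fst_mem_support_of_mem_edges he)
    · grind [Sym2.eq_iff, ha.ne]
  obtain ⟨y₁, y₂, hy₁, hy₂, hadj, hchord⟩ :=
    hG z _ hcyc (by simp only [Walk.length_cons, Walk.length_concat]; omega)
  rw [Walk.adj_toSubgraph_iff_mem_edges] at hchord
  simp only [Walk.support_cons, Walk.support_concat, Walk.edges_cons, Walk.edges_concat,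
    List.concat_eq_append, List.mem_cons, List.mem_append] at hy₁ hy₂ hchord
  -- `q` has no chords, and `z a`, `z b` are edges of the cycle
  grind [hqc.mem_edges, hadj.ne, G.adj_comm]

theorem not_adj_right_of_isChordless {z : V} (hz : z ∉ q.support)
    (hz' : ∀ w ∈ q.support, G.Adj z w → w = a ∨ w = b) (ha : G.Adj z a) : ¬ G.Adj z b := by
  intro hb
  obtain ⟨w, hw, hwa, hwb, hzw⟩ := hG.exists_adj_of_isChordless_s9 hq hqc hlen hz ha hb
  exact (hz' w hw hzw).elim hwa hwb

theorem not_adj_of_isChordless_of_adj_ends {za zb : V} (hza : za ∉ q.support)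
    (hzb : zb ∉ q.support) (hza' : ∀ w ∈ q.support, G.Adj za w → w = a ∨ w = b)
    (hzb' : ∀ w ∈ q.support, G.Adj zb w → w = a ∨ w = b) (ha : G.Adj za a)
    (hb : G.Adj zb b) :
    ¬ G.Adj za zb := by
  intro hab
  have hza_b := hG.not_adj_right_of_isChordless hq hqc hlen hza hza' ha
  have hq' : (q.concat hb.symm).IsPath := hq.concat hzb hb.symm
  have hqc' : (q.concat hb.symm).IsChordless := hqc.concat hb.symm fun w hw hzbw =>
    (hzb' w hw hzbw).resolve_left fun h =>
      hG.not_adj_right_of_isChordless hq hqc hlen hzb hzb' (h ▸ hzbw) hb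
  have hza_q' : za ∉ (q.concat hb.symm).support := by
    rw [Walk.mem_support_concat_iff]
    rintro (h | rfl)
    · exact hza h
    · exact hza_b hb
  obtain ⟨w, hw, hwa, hwzb, hzaw⟩ := hG.exists_adj_of_isChordless_s9 hq' hqc'
    (by rw [Walk.length_concat]; omega) hza_q' ha hab
  rw [Walk.mem_support_concat_iff, or_iff_left hwzb] at hw
  rcases hza' w hw hzaw with rfl | rfl
  · exact hwa rfl
  · exact hza_b hzaw

end IsChordal

theorem IsChordal.adj_of_walk_through_higher_levels (hG : G.IsChordal) (hc : G.Connected)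
    {x a b : V} (hab : a ≠ b) (hba : G.dist x b = G.dist x a) (p : G.Walk a b)
    (hp : ∀ w ∈ p.support, w = a ∨ w = b ∨ G.dist x a < G.dist x w) : G.Adj a b := by
  induction hm : G.dist x a generalizing a b with
  | zero =>
    rw [hm, hc.dist_eq_zero_iff] at hba
    rw [hc.dist_eq_zero_iff] at hm
    exact absurd (hm.symm.trans hba) hab
  | succ m ih =>
  obtain ⟨q, hq, hqc, hqs⟩ := p.exists_isPath_isChordless_support_subset
  replace hp : ∀ w ∈ q.support, w = a ∨ w = b ∨ m + 1 < G.dist x w :=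
    fun w hw => hm ▸ hp w (hqs hw)
  by_contra hnadj
  have hlen : 2 ≤ q.length := by
    have h0 : q.length ≠ 0 := fun h => hab (Walk.eq_of_length_eq_zero h)
    have h1 : q.length ≠ 1 := fun h => hnadj (Walk.adj_of_length_eq_one h)
    omega
  obtain ⟨pa, hpa, hpa'⟩ := hc.exists_adj_dist_eq hm
  obtain ⟨pb, hpb, hpb'⟩ := hc.exists_adj_dist_eq (hba.trans hm)
  have not_mem : ∀ z, G.dist x z = m → z ∉ q.support := by
    intro z hz hzq
    rcases hp z hzq with rfl | rfl | h <;> omega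
  have adj_mem : ∀ z, G.dist x z = m → ∀ w ∈ q.support, G.Adj z w → w = a ∨ w = b := by
    intro z hz w hw hzw
    rcases hp w hw with h | h | h
    · exact .inl h
    · exact .inr h
    · rcases hzw.diff_dist_adj (u := x) with h' | h' | h' <;> omega
  have hpa_pb : pa ≠ pb := fun h => hG.not_adj_right_of_isChordless hq hqc hlen
    (not_mem pa hpa') (adj_mem pa hpa') hpa (h ▸ hpb)
  have hpapb : G.Adj pa pb := by
    refine ih hpa_pb (hpb'.trans hpa'.symm) (.cons hpa (q.concat hpb.symm)) (fun w hw => ?_)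
      hpa'
    rw [Walk.support_cons, List.mem_cons, Walk.mem_support_concat_iff] at hw
    rcases hw with h | h | h
    · exact .inl h
    · rcases hp w h with rfl | rfl | h' <;> omega
    · exact .inr (.inl h)
  exact hG.not_adj_of_isChordless_of_adj_ends hq hqc hlen (not_mem pa hpa') (not_mem pb hpb')
    (adj_mem pa hpa') (adj_mem pb hpb') hpa hpb hpapb

def levelAncestors (G : SimpleGraph V) (x u : V) (m : ℕ) : Set V :=
  {w | G.dist x w = m ∧ G.IsAncestor x w u}

namespace Connected

variable (hc : G.Connected)
include hc

theorem mem_levelAncestors_iff {x u w : V} {m : ℕ} :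
    w ∈ G.levelAncestors x u m ↔
      G.dist x w = m ∧ m < G.dist x u ∧ G.dist u w + m = G.dist x u := by
  rw [levelAncestors, Set.mem_ofPred_eq, hc.isAncestor_iff]
  constructor <;> rintro ⟨rfl, h⟩ <;> exact ⟨rfl, h⟩

theorem disjoint_levelAncestors {x u v : V} {m : ℕ}
    (h : G.dist x u + G.dist x v < G.dist u v + 2 * m) :
    Disjoint (G.levelAncestors x u m) (G.levelAncestors x v m) := by
  refine Set.disjoint_left.mpr fun w hu hv => ?_
  rw [hc.mem_levelAncestors_iff] at hu hv
  have htri : G.dist u v ≤ G.dist u w + G.dist w v := hc.dist_triangle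
  rw [dist_comm (u := w)] at htri
  omega

theorem exists_walk_from_levelAncestors {x u c : V} {m : ℕ} (hm : m < G.dist x u)
    (huc : G.dist u c + m ≤ G.dist x u) :
    ∃ a ∈ G.levelAncestors x u m,
      ∃ p : G.Walk a c, ∀ y ∈ p.support, y = a ∨ m < G.dist x y := by
  have htri : G.dist x u ≤ G.dist x c + G.dist c u := hc.dist_triangle
  rw [dist_comm (u := c)] at htri
  by_cases hcm : G.dist x c = m
  · exact ⟨c, hc.mem_levelAncestors_iff.mpr ⟨hcm, hm, by omega⟩, .nil, by simp⟩
  obtain ⟨a, ha, hua⟩ := hc.exists_dist_eq_and_dist_add_eq hm.le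
  obtain ⟨pa, hpa⟩ := hc.exists_walk_length_eq_dist u a
  obtain ⟨pc, hpc⟩ := hc.exists_walk_length_eq_dist u c
  refine ⟨a, hc.mem_levelAncestors_iff.mpr ⟨ha, hm, hua⟩, pa.reverse.append pc,
    fun y hy => ?_⟩
  rw [Walk.mem_support_append_iff, Walk.support_reverse, List.mem_reverse] at hy
  by_cases hya : y = a
  · exact .inl hya
  refine .inr ?_
  rcases hy with hy | hy
  · exact hc.lt_dist_of_mem_support pa (by omega) hy hya
  · by_cases hyc : y = c
    · subst hyc
      omega
    · exact hc.lt_dist_of_mem_support pc (by omega) hy hyc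

end Connected

namespace IsChordal

variable (hG : G.IsChordal) (hc : G.Connected)
include hG hc

theorem isClique_levelAncestors (x u : V) (m : ℕ) : G.IsClique (G.levelAncestors x u m) := by
  intro a ha b hb hab
  rw [hc.mem_levelAncestors_iff] at ha hb
  obtain ⟨pa, hpa⟩ := hc.exists_walk_length_eq_dist u a
  obtain ⟨pb, hpb⟩ := hc.exists_walk_length_eq_dist u b
  refine hG.adj_of_walk_through_higher_levels hc hab (hb.1.trans ha.1.symm)
    (pa.reverse.append pb) fun w hw => ?_
  rw [Walk.mem_support_append_iff, Walk.support_reverse, List.mem_reverse] at hw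
  by_cases hwa : w = a
  · exact .inl hwa
  by_cases hwb : w = b
  · exact .inr (.inl hwb)
  refine .inr (.inr (ha.1 ▸ ?_))
  rcases hw with hw | hw
  · exact hc.lt_dist_of_mem_support pa (by omega) hw hwa
  · exact hc.lt_dist_of_mem_support pb (by omega) hw hwb

theorem exists_adj_levelAncestors {x u v : V} {m k : ℕ} (hk : 0 < k)
    (hu : G.dist x u = m + k) (hv : G.dist x v = m + k) (huv : G.dist u v = 2 * k + 1) :
    ∃ a ∈ G.levelAncestors x u m, ∃ b ∈ G.levelAncestors x v m, G.Adj a b := by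
  obtain ⟨p, hp⟩ := hc.exists_walk_length_eq_dist u v
  have hmid : G.Adj (p.getVert k) (p.getVert (k + 1)) := p.adj_getVert_succ (by omega)
  have hu_mid : G.dist u (p.getVert k) ≤ k := by
    have := dist_le (p.take k)
    rw [Walk.take_length] at this
    omega
  have hv_mid : G.dist v (p.getVert (k + 1)) ≤ k := by
    have := dist_le (p.drop (k + 1))
    rw [Walk.drop_length, dist_comm] at this
    omega
  obtain ⟨a, ha, pa, hpa⟩ := hc.exists_walk_from_levelAncestors (by omega : m < G.dist x u)
    (by omega : G.dist u (p.getVert k) + m ≤ _)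
  obtain ⟨b, hb, pb, hpb⟩ := hc.exists_walk_from_levelAncestors (by omega : m < G.dist x v)
    (by omega : G.dist v (p.getVert (k + 1)) + m ≤ _)
  have hab : a ≠ b := fun h =>
    Set.disjoint_left.mp (hc.disjoint_levelAncestors (by omega)) ha (h ▸ hb)
  refine ⟨a, ha, b, hb, hG.adj_of_walk_through_higher_levels hc hab (hb.1.trans ha.1.symm)
    (pa.append (.cons hmid pb.reverse)) fun y hy => ?_⟩
  rw [Walk.mem_support_append_iff, Walk.support_cons, List.mem_cons, Walk.support_reverse,
    List.mem_reverse] at hy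
  rw [ha.1]
  rcases hy with hy | rfl | hy
  · exact (hpa y hy).imp_right .inr
  · exact (hpa _ pa.end_mem_support).imp_right .inr
  · exact .inr (hpb y hy)

end IsChordal

end SimpleGraph

theorem ancestor_cliques_adjacent_of_odd_general {V : Type*} (G : SimpleGraph V)
    (hch : G.IsChordal) (hconn : G.Connected) (x u v : V) (ℓ p : ℕ)
    (hu : G.dist u x = ℓ) (hv : G.dist v x = ℓ)
    (hodd : Odd p) (hp : 3 ≤ p) (huv : G.dist u v = p)
    (Ku Kv : Set V)
    (hKu : Ku = {w : V | G.dist x w = ℓ - p / 2 ∧ G.IsAncestor x w u})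
    (hKv : Kv = {w : V | G.dist x w = ℓ - p / 2 ∧ G.IsAncestor x w v}) :
    G.IsClique Ku ∧ G.IsClique Kv ∧ Disjoint Ku Kv ∧ ∃ a ∈ Ku, ∃ b ∈ Kv, G.Adj a b := by
  obtain ⟨k, rfl⟩ := hodd
  have hxu : G.dist x u = ℓ := dist_comm.trans hu
  have hxv : G.dist x v = ℓ := dist_comm.trans hv
  have hkℓ : k < ℓ := by
    have htri : G.dist u v ≤ G.dist u x + G.dist x v := hconn.dist_triangle
    omega
  obtain ⟨m, rfl⟩ : ∃ m, ℓ = m + k := ⟨ℓ - k, by omega⟩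
  rw [show m + k - (2 * k + 1) / 2 = m by omega] at hKu hKv
  subst hKu hKv
  exact ⟨hch.isClique_levelAncestors hconn x u m, hch.isClique_levelAncestors hconn x v m,
    hconn.disjoint_levelAncestors (by omega),
    hch.exists_adj_levelAncestors hconn (by omega) hxu hxv huv⟩

/-- In a finite connected chordal graph `G`, let `u, v` lie on level `ℓ ≥ 1`
with respect to `x` with `d_G(u,v) = p` for an odd `p ≥ 3`, and let `K_u, K_v` be the sets of
ancestors of `u, v` on level `ℓ - ⌊p/2⌋`. Then `K_u` and `K_v` are adjacent cliques: they are
cliques of `G`, they are disjoint, and some vertex of `K_u` is adjacent to some vertex of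
`K_v`. -/
theorem ancestor_cliques_adjacent_of_odd {V : Type*} [Fintype V] (G : SimpleGraph V)
    (hch : G.IsChordal) (hconn : G.Connected) (x u v : V) (ℓ p : ℕ) (hℓ : 1 ≤ ℓ)
    (hu : G.dist u x = ℓ) (hv : G.dist v x = ℓ)
    (hodd : Odd p) (hp : 3 ≤ p) (huv : G.dist u v = p)
    (Ku Kv : Set V)
    (hKu : Ku = {w : V | G.dist x w = ℓ - p / 2 ∧ G.IsAncestor x w u})
    (hKv : Kv = {w : V | G.dist x w = ℓ - p / 2 ∧ G.IsAncestor x w v}) :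
    G.IsClique Ku ∧ G.IsClique Kv ∧ Disjoint Ku Kv ∧ ∃ a ∈ Ku, ∃ b ∈ Kv, G.Adj a b :=
  ancestor_cliques_adjacent_of_odd_general G hch hconn x u v ℓ p hu hv hodd hp huv Ku Kv hKu hKv
end

section
/- Let G be a finite graph with a perfect elimination ordering L, and let K and K* be cliques of G with K ∩ K* ≠ ∅. If the L-minimum vertex of K is distinct from the L-minimum vertex of K*, then these two minimum vertices are adjacent in G. -/
open SimpleGraph

/-- A linear order on the vertices is a *perfect elimination ordering* of `G` if for every
vertex `v`, the neighbours of `v` that are smaller than `v` form a clique. -/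
def SimpleGraph.IsPerfectElimOrdering {V : Type*} [LinearOrder V] (G : SimpleGraph V) : Prop :=
  ∀ v : V, G.IsClique {u : V | G.Adj u v ∧ u < v}

namespace SimpleGraph.IsPerfectElimOrdering

variable {V : Type*} [LinearOrder V] {G : SimpleGraph V}

/-- Either `b = w` is itself a neighbour of `a`, or `a` and `b` are both earlier neighbours
of `w`. -/
theorem adj_of_lt_of_mem_isClique (hpeo : G.IsPerfectElimOrdering) {s t : Set V}
    (hs : G.IsClique s) (ht : G.IsClique t) {a b w : V} (ha : a ∈ s) (hb : b ∈ t)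
    (hws : w ∈ s) (hwt : w ∈ t) (hab : a < b) (hbw : b ≤ w) : G.Adj a b := by
  rcases hbw.eq_or_lt with rfl | hbw
  · exact hs ha hws hab.ne
  · have haw : a < w := hab.trans hbw
    exact hpeo w ⟨hs ha hws haw.ne, haw⟩ ⟨ht hb hwt hbw.ne, hbw⟩ hab.ne

end SimpleGraph.IsPerfectElimOrdering

theorem min_of_intersecting_cliques_adj_general {V : Type*} [LinearOrder V]
    (G : SimpleGraph V) (hpeo : G.IsPerfectElimOrdering)
    (K K' : Finset V) (hK : G.IsClique (K : Set V)) (hK' : G.IsClique (K' : Set V))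
    (hKne : K.Nonempty) (hK'ne : K'.Nonempty) (hmeet : (K ∩ K').Nonempty)
    (hmin : K.min' hKne ≠ K'.min' hK'ne) :
    G.Adj (K.min' hKne) (K'.min' hK'ne) := by
  wlog hlt : K.min' hKne < K'.min' hK'ne generalizing K K'
  · have hgt : K'.min' hK'ne < K.min' hKne := lt_of_le_of_ne (not_lt.mp hlt) hmin.symm
    exact (this K' K hK' hK hK'ne hKne (Finset.inter_comm K K' ▸ hmeet) hmin.symm hgt).symm
  obtain ⟨w, hw⟩ := hmeet
  obtain ⟨hwK, hwK'⟩ := Finset.mem_inter.mp hw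
  exact hpeo.adj_of_lt_of_mem_isClique hK hK' (K.min'_mem hKne) (K'.min'_mem hK'ne) hwK hwK'
    hlt (K'.min'_le w hwK')

/-- Let `G` be a finite graph with a perfect elimination ordering, and let
`K, K'` be cliques of `G` with `K ∩ K' ≠ ∅`. If the minimum vertices of `K` and `K'` are
distinct, then they are adjacent in `G`. -/
theorem min_of_intersecting_cliques_adj {V : Type*} [Fintype V] [LinearOrder V]
    (G : SimpleGraph V) (hpeo : G.IsPerfectElimOrdering)
    (K K' : Finset V) (hK : G.IsClique (K : Set V)) (hK' : G.IsClique (K' : Set V))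
    (hKne : K.Nonempty) (hK'ne : K'.Nonempty) (hmeet : (K ∩ K').Nonempty)
    (hmin : K.min' hKne ≠ K'.min' hK'ne) :
    G.Adj (K.min' hKne) (K'.min' hK'ne) :=
  min_of_intersecting_cliques_adj_general G hpeo K K' hK hK' hKne hK'ne hmeet hmin
end
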